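/- Let W : [0,1]^2 -> [0,1] be symmetric measurable and let k >= 0. For any finite family F_1,...,F_m of k-labeled graphs and real numbers y_1,...,y_m, one has Σ_{p,q} y_p y_q t(F_p F_q, W) >= 0. That is, the parameter t(·,W) is reflection positive. -/

import Mathlib

open MeasureTheory Finset
open scoped Classical

/-- The uniform probability measure on `[0,1] ⊆ ℝ`. -/
noncomputable def unif01 : Measure ℝ := volume.restrict (Set.Icc 0 1)

/-- The homomorphism density `t(F,W)` of a simple graph `F` (on a finite vertex type)
in a symmetric function `W : [0,1]² → [0,1]`. -/
noncomputable def gDens {V : Type} [Fintype V] (F : SimpleGraph V) (W : ℝ → ℝ → ℝ) : ℝ :=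
  ∫ x : V → ℝ,
    (∏ e ∈ F.edgeFinset,
      Sym2.lift ⟨fun a b => (W (x a) (x b) + W (x b) (x a)) / 2,
        fun a b => by ring⟩ e) ∂(Measure.pi fun _ => unif01)

/-- A `k`-labeled graph: a finite simple graph with `k` labeled vertices (the `Sum.inl`
vertices) plus `n` unlabeled vertices (the `Sum.inr` ones). -/
structure LabeledGraph (k : ℕ) where
  n : ℕ
  G : SimpleGraph (Fin k ⊕ Fin n)

/-- The embedding of the vertices of the first factor into the vertex set of the product. -/
def embLeft (k n₁ n₂ : ℕ) : (Fin k ⊕ Fin n₁) ↪ (Fin k ⊕ Fin (n₁ + n₂)) :=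
  (Function.Embedding.refl (Fin k)).sumMap (Fin.castAddEmb n₂)

/-- The embedding of the vertices of the second factor into the vertex set of the product. -/
def embRight (k n₁ n₂ : ℕ) : (Fin k ⊕ Fin n₂) ↪ (Fin k ⊕ Fin (n₁ + n₂)) :=
  (Function.Embedding.refl (Fin k)).sumMap (Fin.natAddEmb n₁)

/-- The product `F₁F₂` of two `k`-labeled graphs: take the disjoint union and identify
vertices carrying the same label, merging parallel edges. -/
def lgProd {k : ℕ} (F₁ F₂ : LabeledGraph k) : LabeledGraph k :=
  ⟨F₁.n + F₂.n, (F₁.G.map (embLeft k F₁.n F₂.n)) ⊔ (F₂.G.map (embRight k F₁.n F₂.n))⟩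

/-!
Integrating out the unlabeled vertices first factors the density of a product:
`t(F_p F_q, W) = ∫ z, (∏_{e ∈ L_p ∪ L_q} w_e(z)) · U_p(z) · U_q(z)`, where `z` are the positions
of the labeled vertices, `L_p` is the set of edges of `F_p` joining two labeled vertices (an edge
shared by `F_p` and `F_q` is merged, hence the union), `w_e(z) ∈ [0,1]` is the weight of such an
edge, and `U_p(z)` integrates the weights of the remaining edges of `F_p` over its unlabeled
vertices. It therefore suffices that for each `z` the matrix `(∏_{e ∈ L_p ∪ L_q} w_e)_{p,q}` is
positive semidefinite, and it is a Gram matrix: for independent events `A_e` of probability `w_e`,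
its entry is the probability that all `A_e` with `e ∈ L_p ∪ L_q` occur, i.e. the inner product of
the indicators of `⋂_{e ∈ L_p} A_e` and `⋂_{e ∈ L_q} A_e`.
-/

section PositiveSemidefinite

variable {ι : Type*} [Fintype ι] [DecidableEq ι]

theorem prod_eq_sum_superset (w : ι → ℝ) (A : Finset ι) :
    ∏ i ∈ A, w i =
      ∑ R : Finset ι, if A ⊆ R then (∏ i ∈ R, w i) * ∏ i ∈ Rᶜ, (1 - w i) else 0 := by
  have hsplit : ∏ i ∈ A, w i = ∏ i, (w i + if i ∈ A then 0 else 1 - w i) := by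
    rw [← Finset.prod_subset (Finset.subset_univ A)]
    · exact Finset.prod_congr rfl fun i hi => by simp [hi]
    · intro i _ hi
      simp [hi]
  rw [hsplit, Fintype.prod_add]
  refine Finset.sum_congr rfl fun R _ => ?_
  split_ifs with hAR
  · congr 1
    exact Finset.prod_congr rfl fun i hi =>
      by rw [if_neg fun hiA => Finset.mem_compl.mp hi (hAR hiA)]
  · obtain ⟨i, hiA, hiR⟩ := Finset.not_subset.mp hAR
    exact mul_eq_zero_of_right _ (Finset.prod_eq_zero (Finset.mem_compl.mpr hiR) (if_pos hiA))

theorem sum_sum_mul_prod_union_nonneg {κ : Type*} [Fintype κ] (w : ι → ℝ)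
    (hw : ∀ i, w i ∈ Set.Icc (0 : ℝ) 1) (S : κ → Finset ι) (c : κ → ℝ) :
    0 ≤ ∑ p, ∑ q, c p * c q * ∏ i ∈ S p ∪ S q, w i := by
  set π : Finset ι → ℝ := fun R => (∏ i ∈ R, w i) * ∏ i ∈ Rᶜ, (1 - w i)
  have hgram : ∑ p, ∑ q, c p * c q * ∏ i ∈ S p ∪ S q, w i =
      ∑ R : Finset ι, π R * (∑ p, if S p ⊆ R then c p else 0) ^ 2 := by
    have hunion : ∀ p q, ∏ i ∈ S p ∪ S q, w i = ∑ R, if S p ⊆ R ∧ S q ⊆ R then π R else 0 :=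
      fun p q => by simp only [prod_eq_sum_superset w (S p ∪ S q), Finset.union_subset_iff, π]
    simp only [hunion, sq, Finset.sum_mul, Finset.mul_sum]
    simp_rw [Finset.sum_comm (s := (Finset.univ : Finset κ))
      (t := (Finset.univ : Finset (Finset ι)))]
    refine Finset.sum_congr rfl fun R _ => ?_
    rw [Finset.sum_comm]
    refine Finset.sum_congr rfl fun p _ => Finset.sum_congr rfl fun q _ => ?_
    split_ifs <;> simp_all [mul_comm]
  rw [hgram]
  exact Finset.sum_nonneg fun R _ => mul_nonneg
    (mul_nonneg (Finset.prod_nonneg fun i _ => (hw i).1)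
      (Finset.prod_nonneg fun i _ => sub_nonneg.mpr (hw i).2)) (sq_nonneg _)

end PositiveSemidefinite

section EdgeWeight

variable {W : ℝ → ℝ → ℝ} {V : Type*}

variable (W) in
noncomputable def edgeWeight (x : V → ℝ) : Sym2 V → ℝ :=
  Sym2.lift ⟨fun a b => (W (x a) (x b) + W (x b) (x a)) / 2, fun a b => by ring⟩

theorem gDens_eq_integral_prod_edgeWeight {V : Type} [Fintype V] (F : SimpleGraph V) :
    gDens F W =
      ∫ x, ∏ e ∈ F.edgeFinset, edgeWeight W x e ∂(Measure.pi fun _ : V => unif01) :=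
  rfl

theorem edgeWeight_map {V' : Type*} (f : V → V') (x : V' → ℝ) (e : Sym2 V) :
    edgeWeight W x (e.map f) = edgeWeight W (x ∘ f) e := by
  induction e using Sym2.ind
  rfl

theorem edgeWeight_mem_Icc (hW : ∀ a b, W a b ∈ Set.Icc (0 : ℝ) 1) (x : V → ℝ) (e : Sym2 V) :
    edgeWeight W x e ∈ Set.Icc (0 : ℝ) 1 := by
  induction e using Sym2.ind with
  | _ a b =>
    obtain ⟨h₁, h₂⟩ := hW (x a) (x b)
    obtain ⟨h₃, h₄⟩ := hW (x b) (x a)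
    constructor <;> simp only [edgeWeight, Sym2.lift_mk] <;> linarith

theorem prod_edgeWeight_mem_Icc (hW : ∀ a b, W a b ∈ Set.Icc (0 : ℝ) 1) (x : V → ℝ)
    (s : Finset (Sym2 V)) : ∏ e ∈ s, edgeWeight W x e ∈ Set.Icc (0 : ℝ) 1 :=
  ⟨Finset.prod_nonneg fun e _ => (edgeWeight_mem_Icc hW x e).1,
    Finset.prod_le_one (fun e _ => (edgeWeight_mem_Icc hW x e).1)
      fun e _ => (edgeWeight_mem_Icc hW x e).2⟩

theorem measurable_edgeWeight (hW : Measurable (Function.uncurry W)) (e : Sym2 V) :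
    Measurable fun x : V → ℝ => edgeWeight W x e := by
  induction e using Sym2.ind with
  | _ a b =>
    have h : ∀ u v : V, Measurable fun x : V → ℝ => W (x u) (x v) := fun u v =>
      hW.comp (f := fun x : V → ℝ => (x u, x v)) (by fun_prop)
    exact ((h a b).add (h b a)).div_const 2

theorem measurable_prod_edgeWeight (hW : Measurable (Function.uncurry W)) (s : Finset (Sym2 V)) :
    Measurable fun x : V → ℝ => ∏ e ∈ s, edgeWeight W x e :=
  Finset.measurable_prod s fun e _ => measurable_edgeWeight hW e

end EdgeWeight

section LabeledEdges

variable {α β γ : Type*}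

def IsLabeledEdge (e : Sym2 (α ⊕ β)) : Prop := ∀ v ∈ e, v.isLeft

theorem isLabeledEdge_map_iff {f : α ⊕ β → α ⊕ γ} (hf : ∀ v, (f v).isLeft = v.isLeft)
    (e : Sym2 (α ⊕ β)) : IsLabeledEdge (e.map f) ↔ IsLabeledEdge e := by
  simp only [IsLabeledEdge, Sym2.mem_map, forall_exists_index, and_imp,
    forall_apply_eq_imp_iff₂, hf]

theorem isLabeledEdge_iff_exists_map_inl (e : Sym2 (α ⊕ β)) :
    IsLabeledEdge e ↔ ∃ e' : Sym2 α, e'.map Sum.inl = e := by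
  constructor
  · induction e using Sym2.ind with
    | _ u v =>
      intro h
      obtain ⟨a, rfl⟩ := Sum.isLeft_iff.mp (h u (Sym2.mem_mk_left u v))
      obtain ⟨b, rfl⟩ := Sum.isLeft_iff.mp (h v (Sym2.mem_mk_right _ v))
      exact ⟨s(a, b), rfl⟩
  · rintro ⟨e', rfl⟩ w hw
    obtain ⟨a, -, rfl⟩ := Sym2.mem_map.mp hw
    rfl

theorem filter_isLabeledEdge_map [Fintype α] (E : Finset (Sym2 (α ⊕ β))) (f : α ⊕ β ↪ α ⊕ γ)
    (hinl : f ∘ Sum.inl = Sum.inl) (hf : ∀ v, (f v).isLeft = v.isLeft) :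
    (E.map f.sym2Map).filter IsLabeledEdge =
      (univ.filter fun e : Sym2 α => e.map Sum.inl ∈ E).map
        (Function.Embedding.inl : α ↪ α ⊕ γ).sym2Map := by
  have hmap : ∀ e : Sym2 α, (e.map Sum.inl).map f = e.map Sum.inl := fun e => by
    rw [Sym2.map_map, hinl]
  ext e
  simp only [Finset.mem_filter, Finset.mem_map, Finset.mem_univ, true_and,
    Function.Embedding.sym2Map_apply, Function.Embedding.inl_apply]
  constructor
  · rintro ⟨⟨e₀, he₀, rfl⟩, hlab⟩
    obtain ⟨e', rfl⟩ :=
      (isLabeledEdge_iff_exists_map_inl e₀).mp ((isLabeledEdge_map_iff hf e₀).mp hlab)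
    exact ⟨e', he₀, (hmap e').symm⟩
  · rintro ⟨e', he', rfl⟩
    exact ⟨⟨_, he', hmap e'⟩, (isLabeledEdge_iff_exists_map_inl _).mpr ⟨e', rfl⟩⟩

theorem filter_not_isLabeledEdge_map (E : Finset (Sym2 (α ⊕ β))) (f : α ⊕ β ↪ α ⊕ γ)
    (hf : ∀ v, (f v).isLeft = v.isLeft) :
    (E.map f.sym2Map).filter (fun e => ¬IsLabeledEdge e) =
      (E.filter fun e => ¬IsLabeledEdge e).map f.sym2Map := by
  rw [Finset.filter_map]
  congr 1
  exact Finset.filter_congr fun e _ => not_congr (isLabeledEdge_map_iff hf e)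

theorem isLeft_sumMap_refl (g : β ↪ γ) (v : α ⊕ β) :
    ((Function.Embedding.refl α).sumMap g v).isLeft = v.isLeft := by
  cases v <;> rfl

theorem disjoint_map_sumMap_refl {β₁ β₂ : Type*} (g₁ : β₁ ↪ β) (g₂ : β₂ ↪ β)
    (hg : ∀ i j, g₁ i ≠ g₂ j) (E₁ : Finset (Sym2 (α ⊕ β₁))) (E₂ : Finset (Sym2 (α ⊕ β₂)))
    (h₁ : ∀ e ∈ E₁, ¬IsLabeledEdge e) :
    Disjoint (E₁.map ((Function.Embedding.refl α).sumMap g₁).sym2Map)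
      (E₂.map ((Function.Embedding.refl α).sumMap g₂).sym2Map) := by
  refine Finset.disjoint_left.mpr ?_
  rintro _ hmem₁ hmem₂
  obtain ⟨e₁, he₁, rfl⟩ := Finset.mem_map.mp hmem₁
  obtain ⟨e₂, -, he⟩ := Finset.mem_map.mp hmem₂
  refine h₁ e₁ he₁ fun u hu => ?_
  have hmem : Sum.map id g₁ u ∈ ((Function.Embedding.refl α).sumMap g₂).sym2Map e₂ :=
    he ▸ Sym2.mem_map.mpr ⟨u, hu, rfl⟩
  obtain ⟨v, -, hv⟩ := Sym2.mem_map.mp hmem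
  rcases u with a | i
  · rfl
  · rcases v with b | j
    · exact absurd hv Sum.inl_ne_inr
    · exact absurd (Sum.inr.inj hv).symm (hg i j)

end LabeledEdges

namespace SimpleGraph

variable {α β : Type*} [Fintype α]

noncomputable def labeledEdges [Fintype β] (G : SimpleGraph (α ⊕ β)) : Finset (Sym2 α) :=
  univ.filter fun e => e.map Sum.inl ∈ G.edgeFinset

noncomputable def unlabeledEdges [Fintype β] (G : SimpleGraph (α ⊕ β)) : Finset (Sym2 (α ⊕ β)) :=
  G.edgeFinset.filter fun e => ¬IsLabeledEdge e

/-- Stated for a finset `E` with the edge set of the glued graph, not for its `edgeFinset`, so that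
it applies to `(lgProd F₁ F₂).G`, whose vertex type and `Fintype` instance agree with those of the
glued graph only after unfolding `lgProd`. -/
theorem prod_edges_map_sup_map {M : Type*} [CommMonoid M] {β₁ β₂ : Type*}
    [Fintype β₁] [Fintype β₂] [DecidableEq α] [DecidableEq β]
    {G₁ : SimpleGraph (α ⊕ β₁)} {G₂ : SimpleGraph (α ⊕ β₂)} {g₁ : β₁ ↪ β} {g₂ : β₂ ↪ β}
    (hg : ∀ i j, g₁ i ≠ g₂ j) {E : Finset (Sym2 (α ⊕ β))}
    (hE : (E : Set (Sym2 (α ⊕ β))) = (G₁.map ((Function.Embedding.refl α).sumMap g₁) ⊔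
      G₂.map ((Function.Embedding.refl α).sumMap g₂)).edgeSet)
    (h : Sym2 (α ⊕ β) → M) :
    ∏ e ∈ E, h e =
      (∏ e ∈ G₁.labeledEdges ∪ G₂.labeledEdges, h (e.map Sum.inl)) *
        ((∏ e ∈ G₁.unlabeledEdges, h (e.map (Sum.map id g₁))) *
          ∏ e ∈ G₂.unlabeledEdges, h (e.map (Sum.map id g₂))) := by
  have hE' : E = G₁.edgeFinset.map ((Function.Embedding.refl α).sumMap g₁).sym2Map ∪
      G₂.edgeFinset.map ((Function.Embedding.refl α).sumMap g₂).sym2Map :=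
    Finset.coe_injective (by
      rw [hE, edgeSet_sup, edgeSet_map, edgeSet_map]
      simp only [Finset.coe_union, Finset.coe_map, coe_edgeFinset])
  rw [← Finset.prod_filter_mul_prod_filter_not _ IsLabeledEdge, hE',
    Finset.filter_union, Finset.filter_union,
    filter_isLabeledEdge_map _ _ rfl (isLeft_sumMap_refl g₁),
    filter_isLabeledEdge_map _ _ rfl (isLeft_sumMap_refl g₂),
    filter_not_isLabeledEdge_map _ _ (isLeft_sumMap_refl g₁),
    filter_not_isLabeledEdge_map _ _ (isLeft_sumMap_refl g₂),
    ← Finset.map_union, Finset.prod_map,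
    Finset.prod_union
      (disjoint_map_sumMap_refl g₁ g₂ hg _ _ fun e he => (Finset.mem_filter.mp he).2),
    Finset.prod_map, Finset.prod_map]
  rfl

end SimpleGraph

section PiIntegral

variable {X : Type*} [MeasurableSpace X] {ι κ : Type*}

theorem sumPiEquivProdPi_symm_eq_sumElim (p : (ι → X) × (κ → X)) :
    (MeasurableEquiv.sumPiEquivProdPi fun _ : ι ⊕ κ => X).symm p = Sum.elim p.1 p.2 := by
  funext i
  cases i <;> rfl

theorem measurable_sumElim_pi :
    Measurable fun p : (ι → X) × (κ → X) => Sum.elim p.1 p.2 := by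
  have h : (fun p : (ι → X) × (κ → X) => Sum.elim p.1 p.2) =
      (MeasurableEquiv.sumPiEquivProdPi fun _ : ι ⊕ κ => X).symm :=
    funext fun p => (sumPiEquivProdPi_symm_eq_sumElim p).symm
  exact h ▸ MeasurableEquiv.measurable _

variable (ν : Measure X) [SigmaFinite ν] [Fintype ι] [Fintype κ]

theorem integral_pi_sum {f : (ι ⊕ κ → X) → ℝ} (hf : Integrable f (Measure.pi fun _ => ν)) :
    ∫ x, f x ∂(Measure.pi fun _ => ν) =
      ∫ z, ∫ x, f (Sum.elim z x) ∂(Measure.pi fun _ => ν) ∂(Measure.pi fun _ => ν) := by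
  have he := measurePreserving_sumPiEquivProdPi_symm fun _ : ι ⊕ κ => ν
  rw [← he.integral_comp', integral_prod]
  · simp only [sumPiEquivProdPi_symm_eq_sumElim]
  · exact he.integrable_comp_emb (MeasurableEquiv.measurableEmbedding _) |>.mpr hf

theorem integral_pi_sum_mul (f : (ι → X) → ℝ) (g : (κ → X) → ℝ) :
    ∫ x : ι ⊕ κ → X, f (x ∘ Sum.inl) * g (x ∘ Sum.inr) ∂(Measure.pi fun _ => ν) =
      (∫ z, f z ∂(Measure.pi fun _ => ν)) * ∫ z, g z ∂(Measure.pi fun _ => ν) := by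
  have he := measurePreserving_sumPiEquivProdPi_symm fun _ : ι ⊕ κ => ν
  rw [← he.integral_comp', ← integral_prod_mul]
  simp only [sumPiEquivProdPi_symm_eq_sumElim]
  rfl

theorem integral_comp_castAdd_mul_comp_natAdd {n₁ n₂ : ℕ} (f : (Fin n₁ → X) → ℝ)
    (g : (Fin n₂ → X) → ℝ) :
    ∫ x : Fin (n₁ + n₂) → X, f (x ∘ Fin.castAdd n₂) * g (x ∘ Fin.natAdd n₁)
        ∂(Measure.pi fun _ => ν) =
      (∫ z, f z ∂(Measure.pi fun _ => ν)) * ∫ z, g z ∂(Measure.pi fun _ => ν) := by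
  have he := measurePreserving_piCongrLeft (fun _ : Fin (n₁ + n₂) => ν) finSumFinEquiv
  rw [← he.integral_comp', ← integral_pi_sum_mul]
  congr with y
  congr 2 <;> funext i
  · exact MeasurableEquiv.piCongrLeft_apply_apply (β := fun _ => X) finSumFinEquiv y (Sum.inl i)
  · exact MeasurableEquiv.piCongrLeft_apply_apply (β := fun _ => X) finSumFinEquiv y (Sum.inr i)

end PiIntegral

instance : IsProbabilityMeasure unif01 :=
  ⟨by simp [unif01]⟩

theorem integrable_of_mem_Icc {Y : Type*} [MeasurableSpace Y] {μ : Measure Y} [IsFiniteMeasure μ]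
    {f : Y → ℝ} (hf : Measurable f) (h : ∀ y, f y ∈ Set.Icc (0 : ℝ) 1) : Integrable f μ :=
  .of_bound hf.aestronglyMeasurable 1 <| ae_of_all _ fun y =>
    abs_le.mpr ⟨by linarith [(h y).1], (h y).2⟩

namespace LabeledGraph

variable {W : ℝ → ℝ → ℝ} {k : ℕ}

variable (W) in
noncomputable def unlabeledDensity (F : LabeledGraph k) (z : Fin k → ℝ) : ℝ :=
  ∫ x, ∏ e ∈ F.G.unlabeledEdges, edgeWeight W (Sum.elim z x) e
    ∂(Measure.pi fun _ : Fin F.n => unif01)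

theorem measurable_unlabeledDensity (hWmeas : Measurable (Function.uncurry W))
    (F : LabeledGraph k) : Measurable (unlabeledDensity W F) :=
  ((measurable_prod_edgeWeight hWmeas F.G.unlabeledEdges).comp
    measurable_sumElim_pi).stronglyMeasurable.integral_prod_right'.measurable

theorem unlabeledDensity_mem_Icc (hWmeas : Measurable (Function.uncurry W))
    (hW : ∀ a b, W a b ∈ Set.Icc (0 : ℝ) 1) (F : LabeledGraph k) (z : Fin k → ℝ) :
    unlabeledDensity W F z ∈ Set.Icc (0 : ℝ) 1 := by
  have hmem := fun x : Fin F.n → ℝ =>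
    prod_edgeWeight_mem_Icc hW (Sum.elim z x) F.G.unlabeledEdges
  refine ⟨integral_nonneg fun x => (hmem x).1, ?_⟩
  calc unlabeledDensity W F z ≤ ∫ _, (1 : ℝ) ∂(Measure.pi fun _ : Fin F.n => unif01) :=
        integral_mono (integrable_of_mem_Icc ((measurable_prod_edgeWeight hWmeas _).comp
          (measurable_sumElim_pi.comp measurable_prodMk_left)) hmem) (integrable_const 1)
          fun x => (hmem x).2
    _ = 1 := by simp

theorem prod_edgeWeight_lgProd (F₁ F₂ : LabeledGraph k) (z : Fin k → ℝ)
    (x : Fin (F₁.n + F₂.n) → ℝ) :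
    ∏ e ∈ (lgProd F₁ F₂).G.edgeFinset, edgeWeight W (Sum.elim z x) e =
      (∏ e ∈ F₁.G.labeledEdges ∪ F₂.G.labeledEdges, edgeWeight W z e) *
        ((∏ e ∈ F₁.G.unlabeledEdges, edgeWeight W (Sum.elim z (x ∘ Fin.castAdd F₂.n)) e) *
          ∏ e ∈ F₂.G.unlabeledEdges, edgeWeight W (Sum.elim z (x ∘ Fin.natAdd F₁.n)) e) := by
  have hdisj : ∀ i j, Fin.castAddEmb F₂.n i ≠ Fin.natAddEmb F₁.n j := fun i j h => by
    have := congrArg Fin.val h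
    simp only [Fin.castAddEmb_apply, Fin.natAddEmb_apply, Fin.val_castAdd, Fin.val_natAdd] at this
    omega
  refine (SimpleGraph.prod_edges_map_sup_map (β := Fin (F₁.n + F₂.n)) hdisj
    (SimpleGraph.coe_edgeFinset (lgProd F₁ F₂).G)
    (edgeWeight W (Sum.elim z x))).trans ?_
  simp only [edgeWeight_map, Sum.elim_comp_inl, Sum.elim_comp_map, Function.comp_id]
  rfl

theorem gDens_lgProd (hWmeas : Measurable (Function.uncurry W))
    (hW : ∀ a b, W a b ∈ Set.Icc (0 : ℝ) 1) (F₁ F₂ : LabeledGraph k) :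
    gDens (lgProd F₁ F₂).G W =
      ∫ z, (∏ e ∈ F₁.G.labeledEdges ∪ F₂.G.labeledEdges, edgeWeight W z e) *
        (unlabeledDensity W F₁ z * unlabeledDensity W F₂ z) ∂(Measure.pi fun _ => unif01) := by
  rw [gDens_eq_integral_prod_edgeWeight]
  refine (integral_pi_sum (κ := Fin (F₁.n + F₂.n)) unif01
    (f := fun x => ∏ e ∈ (lgProd F₁ F₂).G.edgeFinset, edgeWeight W x e) (integrable_of_mem_Icc
      (measurable_prod_edgeWeight hWmeas _) fun x => prod_edgeWeight_mem_Icc hW x _)).trans ?_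
  congr with z
  simp only [prod_edgeWeight_lgProd, integral_const_mul]
  exact congrArg _ (integral_comp_castAdd_mul_comp_natAdd unif01
    (fun x => ∏ e ∈ F₁.G.unlabeledEdges, edgeWeight W (Sum.elim z x) e)
    (fun x => ∏ e ∈ F₂.G.unlabeledEdges, edgeWeight W (Sum.elim z x) e))

end LabeledGraph

theorem gDens_reflectionPositive_general {k m : ℕ} (F : Fin m → LabeledGraph k)
    (y : Fin m → ℝ) (W : ℝ → ℝ → ℝ)
    (hWmeas : Measurable (Function.uncurry W))
    (hWmem : ∀ x y, W x y ∈ Set.Icc (0 : ℝ) 1) :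
    0 ≤ ∑ p : Fin m, ∑ q : Fin m, y p * y q * gDens (lgProd (F p) (F q)).G W := by
  set f : Fin m → Fin m → (Fin k → ℝ) → ℝ := fun p q z =>
    (∏ e ∈ (F p).G.labeledEdges ∪ (F q).G.labeledEdges, edgeWeight W z e) *
      ((F p).unlabeledDensity W z * (F q).unlabeledDensity W z)
  have hf : ∀ p q, Integrable (f p q) (Measure.pi fun _ => unif01) := fun p q =>
    integrable_of_mem_Icc ((measurable_prod_edgeWeight hWmeas _).mul
      ((LabeledGraph.measurable_unlabeledDensity hWmeas _).mul
        (LabeledGraph.measurable_unlabeledDensity hWmeas _)))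
      fun z => unitInterval.mul_mem (prod_edgeWeight_mem_Icc hWmem z _) (unitInterval.mul_mem
        (LabeledGraph.unlabeledDensity_mem_Icc hWmeas hWmem _ z)
        (LabeledGraph.unlabeledDensity_mem_Icc hWmeas hWmem _ z))
  have hpointwise : ∀ z, 0 ≤ ∑ p, ∑ q, y p * y q * f p q z := fun z =>
    (sum_sum_mul_prod_union_nonneg (edgeWeight W z) (edgeWeight_mem_Icc hWmem z)
      (fun p => (F p).G.labeledEdges) (fun p => y p * (F p).unlabeledDensity W z)).trans_eq
      (Finset.sum_congr rfl fun p _ => Finset.sum_congr rfl fun q _ => by ring)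
  calc 0 ≤ ∫ z, ∑ p, ∑ q, y p * y q * f p q z ∂(Measure.pi fun _ => unif01) :=
        integral_nonneg hpointwise
    _ = ∑ p, ∑ q, y p * y q * gDens (lgProd (F p) (F q)).G W := by
        rw [integral_finsetSum _ fun p _ => integrable_finsetSum _ fun q _ => (hf p q).const_mul _]
        simp only [integral_finsetSum _ fun q _ => (hf _ q).const_mul _, integral_const_mul,
          LabeledGraph.gDens_lgProd hWmeas hWmem, f]

/-- Reflection positivity of `t(·,W)`: for any `k`-labeled graphs `F₁,…,F_m` and reals
`y₁,…,y_m`, we have `Σ_{p,q} y_p y_q t(F_p F_q, W) ≥ 0`. -/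
theorem gDens_reflectionPositive {k m : ℕ} (F : Fin m → LabeledGraph k)
    (y : Fin m → ℝ) (W : ℝ → ℝ → ℝ)
    (hWmeas : Measurable (Function.uncurry W))
    (hWsymm : ∀ x y, W x y = W y x)
    (hWmem : ∀ x y, W x y ∈ Set.Icc (0 : ℝ) 1) :
    0 ≤ ∑ p : Fin m, ∑ q : Fin m, y p * y q * gDens (lgProd (F p) (F q)).G W :=
  gDens_reflectionPositive_general F y W hWmeas hWmem
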